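/- arXiv:2509.26230 — 2 statements merged into one kernel-verified Lean document; each statement's English description precedes it below -/
import Mathlib

section
/- Let D ⊆ ℂⁿ be a ℂ-proper convex domain, let ξ ∈ ∂D be a point of locally finite type, and let φ : 𝔻 → D be a complex geodesic with endpoint ξ. Then for every ζ ∈ 𝔻, Ω_ξ(φ(ζ)) = −(1−|ζ|²)/(|1−ζ|² · φ'_N(1)). -/
open Filter Topology Metric Set

noncomputable section

/-- `ℂⁿ` as a complex Euclidean space. -/
abbrev En (n : ℕ) := EuclideanSpace ℂ (Fin n)

/-- The open unit disc in `ℂ`. -/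
def unitDisc : Set ℂ := Metric.ball 0 1

/-- The Poincaré distance on the unit disc, normalized as
`ρ(ζ₁,ζ₂) = log((1+m)/(1−m))` with `m = |ζ₁−ζ₂|/|1−conj(ζ₂)ζ₁|`. -/
def poincareDist (ζ₁ ζ₂ : ℂ) : ℝ :=
  Real.log ((1 + ‖ζ₁ - ζ₂‖ / ‖1 - (starRingEnd ℂ) ζ₂ * ζ₁‖) /
    (1 - ‖ζ₁ - ζ₂‖ / ‖1 - (starRingEnd ℂ) ζ₂ * ζ₁‖))

/-- The (one-disc) Kobayashi distance of a (convex) domain `D`. -/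
def kob {E : Type*} [NormedAddCommGroup E] [NormedSpace ℂ E] (D : Set E) (z w : E) : ℝ :=
  sInf { c | ∃ φ : ℂ → E, DifferentiableOn ℂ φ unitDisc ∧ MapsTo φ unitDisc D ∧
    ∃ ζ₁ ∈ unitDisc, ∃ ζ₂ ∈ unitDisc, φ ζ₁ = z ∧ φ ζ₂ = w ∧ c = poincareDist ζ₁ ζ₂ }

/-- A `ℂ`-proper convex domain: nonempty, open, convex, containing no complex affine line. -/
def IsCProperConvex {E : Type*} [NormedAddCommGroup E] [NormedSpace ℂ E] (D : Set E) : Prop :=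
  D.Nonempty ∧ IsOpen D ∧ Convex ℝ D ∧ ¬ ∃ z v : E, v ≠ 0 ∧ ∀ ζ : ℂ, z + ζ • v ∈ D

/-- A complex geodesic of `D`: a holomorphic isometry from the Poincaré disc into `D`. -/
def IsComplexGeodesic {E : Type*} [NormedAddCommGroup E] [NormedSpace ℂ E]
    (D : Set E) (φ : ℂ → E) : Prop :=
  DifferentiableOn ℂ φ unitDisc ∧ MapsTo φ unitDisc D ∧
    ∀ ζ₁ ∈ unitDisc, ∀ ζ₂ ∈ unitDisc, kob D (φ ζ₁) (φ ζ₂) = poincareDist ζ₁ ζ₂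

/-- `φ` has endpoint `ξ`: `φ(t) → ξ` as `t → 1⁻` along the real axis. -/
def HasEndpoint {E : Type*} [NormedAddCommGroup E] [NormedSpace ℂ E]
    (φ : ℂ → E) (ξ : E) : Prop :=
  Tendsto (fun t : ℝ => φ (t : ℂ)) (𝓝[<] (1 : ℝ)) (𝓝 ξ)

/-- The standard Hermitian product `⟨z,w⟩ = Σ_j z_j conj(w_j)` on `ℂⁿ`. -/
def herm {n : ℕ} (z w : En n) : ℂ := ∑ j, z j * (starRingEnd ℂ) (w j)

/-- The Stolz region at `σ ∈ ∂𝔻` with aperture `M`. -/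
def stolzAt (σ : ℂ) (M : ℝ) : Set ℂ :=
  {ζ ∈ unitDisc | ‖σ - ζ‖ < M * (1 - ‖ζ‖)}

/-- Non-tangential (angular) limit of `g` at `σ ∈ ∂𝔻`: limit within every Stolz region. -/
def NTLim {α : Type*} [TopologicalSpace α] (g : ℂ → α) (σ : ℂ) (a : α) : Prop :=
  ∀ M : ℝ, 1 < M → Tendsto g (𝓝[stolzAt σ M] σ) (𝓝 a)

/-- `ξ ∈ ∂D` is a point of locally finite type: near `ξ` the boundary is `C^L`-smooth
(with a `C^L` local defining function with nonvanishing differential) and the order of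
vanishing of the defining function along every complex line through a nearby boundary
point is at most `L`. -/
def IsLocallyFiniteType {n : ℕ} (D : Set (En n)) (ξ : En n) : Prop :=
  ξ ∈ frontier D ∧ ∃ L : ℕ, 2 ≤ L ∧ ∃ U : Set (En n), IsOpen U ∧ ξ ∈ U ∧
    ∃ r : En n → ℝ, ContDiffOn ℝ L r U ∧ (∀ x ∈ U, (x ∈ D ↔ r x < 0)) ∧
      (∀ x ∈ frontier D ∩ U, fderiv ℝ r x ≠ 0) ∧
      (∀ η ∈ frontier D ∩ U, ∀ v : En n, v ≠ 0 →
        ¬ (fun ζ : ℂ => r (η + ζ • v)) =o[𝓝 (0 : ℂ)] fun ζ : ℂ => ‖ζ‖ ^ L)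

/-- `nor` is the outer unit normal of the convex domain `D` at `ξ ∈ ∂D`:
a unit vector whose associated real supporting hyperplane at `ξ` keeps `D` strictly
on its negative side. -/
def IsOuterUnitNormal {n : ℕ} (D : Set (En n)) (ξ nor : En n) : Prop :=
  ‖nor‖ = 1 ∧ ∀ z ∈ D, (herm (z - ξ) nor).re < 0

/-- `Ω` is the pluricomplex Poisson kernel of `D` at `ξ` (with outer unit normal `nor`):
`Ω(z) = −1/φ'_N(1)` for any complex geodesic `φ` with `φ(0) = z` and endpoint `ξ`, where
`φ'_N(1)` is the non-tangential limit of `⟨φ'(ζ), n_ξ⟩` at `1`. -/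
def IsPoissonKernel {n : ℕ} (D : Set (En n)) (ξ nor : En n) (Ω : En n → ℝ) : Prop :=
  ∀ z ∈ D, ∀ φ : ℂ → En n, IsComplexGeodesic D φ → φ 0 = z → HasEndpoint φ ξ →
    ∀ a : ℝ, 0 < a → NTLim (fun ζ => herm (deriv φ ζ) nor) 1 (a : ℂ) → Ω z = -1 / a

/-- `h` is the horofunction of `D` with center `ξ` and base-point `p`:
`h(z) = lim_{w→ξ} [k_D(z,w) − k_D(w,p)]`. -/
def IsHorofunction {n : ℕ} (D : Set (En n)) (ξ p : En n) (h : En n → ℝ) : Prop :=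
  ∀ z ∈ D, Tendsto (fun w => kob D z w - kob D w p) (𝓝[D] ξ) (𝓝 (h z))

/-- Euclidean distance to the boundary of `D`. -/
def deltaD {E : Type*} [NormedAddCommGroup E] [NormedSpace ℂ E] (D : Set E) (z : E) : ℝ :=
  Metric.infDist z (frontier D)

/-!
Precomposing `φ` with the disc automorphism `N` that fixes `1` and sends `0` to `ζ` gives a
complex geodesic `φ ∘ N` through `φ ζ`. Since `N` maps Stolz regions at `1` into Stolz regions
at `1`, its non-tangential derivative at `1` is `N'(1) φ'_N(1)`, with
`N'(1) = |1 - ζ|² / (1 - |ζ|²)`; the definition of `Ω_ξ` then gives the formula.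

The delicate point is that `φ ∘ N` still has endpoint `ξ`. The curve `N(t)` is tangent to the
radius at `1`, so its pseudo-hyperbolic distance to `|N(t)|` tends to `0`. For a complex
functional `Λ` whose real part is bounded above on `D`, `Λ ∘ φ` maps the disc into a half-plane,
and Schwarz–Pick forces `Λ (φ (N t)) - Λ (φ |N t|) → 0`. By Hahn–Banach, a convex domain
containing no complex line has enough such functionals to span the dual space, so
`φ (N t) - φ |N t| → 0`.
-/

open ComplexConjugate Complex

lemma mem_unitDisc {z : ℂ} : z ∈ unitDisc ↔ ‖z‖ < 1 := mem_ball_zero_iff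

def mobius (A B ζ : ℂ) : ℂ := (A * ζ + B) / (conj B * ζ + conj A)

def pseudoDist (ζ₁ ζ₂ : ℂ) : ℝ := ‖ζ₁ - ζ₂‖ / ‖1 - conj ζ₂ * ζ₁‖

section Mobius

variable {A B : ℂ}

lemma mobius_denom_ne_zero (hAB : ‖B‖ < ‖A‖) {ζ : ℂ} (hζ : ‖ζ‖ ≤ 1) :
    conj B * ζ + conj A ≠ 0 := by
  intro h
  have : ‖conj A‖ = ‖conj B * ζ‖ := by rw [eq_neg_of_add_eq_zero_right h, norm_neg]
  rw [norm_mul, Complex.norm_conj, Complex.norm_conj] at this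
  nlinarith [norm_nonneg B]

lemma mul_conj_sub_mul_conj_ne_zero (hAB : ‖B‖ < ‖A‖) : A * conj A - B * conj B ≠ 0 := by
  rw [mul_conj', mul_conj', ← ofReal_pow, ← ofReal_pow, ← ofReal_sub, ofReal_ne_zero]
  nlinarith [norm_nonneg B]

lemma sq_norm_denom_sub_sq_norm_num (A B ζ : ℂ) :
    ‖conj B * ζ + conj A‖ ^ 2 - ‖A * ζ + B‖ ^ 2 = (‖A‖ ^ 2 - ‖B‖ ^ 2) * (1 - ‖ζ‖ ^ 2) := by
  simp only [← normSq_eq_norm_sq, normSq_apply, add_re, add_im, mul_re, mul_im, conj_re, conj_im]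
  ring

lemma one_sub_sq_norm_mobius_mul (hAB : ‖B‖ < ‖A‖) {ζ : ℂ} (hζ : ‖ζ‖ ≤ 1) :
    (1 - ‖mobius A B ζ‖ ^ 2) * ‖conj B * ζ + conj A‖ ^ 2 =
      (‖A‖ ^ 2 - ‖B‖ ^ 2) * (1 - ‖ζ‖ ^ 2) := by
  have := norm_pos_iff.2 (mobius_denom_ne_zero hAB hζ)
  rw [mobius, norm_div, div_pow, ← sq_norm_denom_sub_sq_norm_num, sub_mul, one_mul,
    div_mul_cancel₀ _ (pow_ne_zero 2 this.ne')]

lemma norm_mobius_lt_one (hAB : ‖B‖ < ‖A‖) {ζ : ℂ} (hζ : ‖ζ‖ < 1) : ‖mobius A B ζ‖ < 1 := by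
  have h := one_sub_sq_norm_mobius_mul hAB hζ.le
  have hpos : 0 < (‖A‖ ^ 2 - ‖B‖ ^ 2) * (1 - ‖ζ‖ ^ 2) :=
    mul_pos (by nlinarith [norm_nonneg B]) (by nlinarith [norm_nonneg ζ])
  by_contra! h1
  have := mul_nonpos_of_nonpos_of_nonneg (by nlinarith : 1 - ‖mobius A B ζ‖ ^ 2 ≤ 0)
    (sq_nonneg ‖conj B * ζ + conj A‖)
  linarith

lemma mapsTo_mobius (hAB : ‖B‖ < ‖A‖) : MapsTo (mobius A B) unitDisc unitDisc :=
  fun _ hζ => mem_unitDisc.2 (norm_mobius_lt_one hAB (mem_unitDisc.1 hζ))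

lemma mobius_sub_mobius {ζ₁ ζ₂ : ℂ} (h₁ : conj B * ζ₁ + conj A ≠ 0)
    (h₂ : conj B * ζ₂ + conj A ≠ 0) :
    mobius A B ζ₁ - mobius A B ζ₂ = (A * conj A - B * conj B) * (ζ₁ - ζ₂) /
      ((conj B * ζ₁ + conj A) * (conj B * ζ₂ + conj A)) := by
  rw [mobius, mobius, div_sub_div _ _ h₁ h₂]
  ring

lemma one_sub_conj_mobius_mul_mobius {ζ₁ ζ₂ : ℂ} (h₁ : conj B * ζ₁ + conj A ≠ 0)
    (h₂ : conj B * ζ₂ + conj A ≠ 0) :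
    1 - conj (mobius A B ζ₂) * mobius A B ζ₁ = (A * conj A - B * conj B) * (1 - conj ζ₂ * ζ₁) /
      (conj (conj B * ζ₂ + conj A) * (conj B * ζ₁ + conj A)) := by
  have h₂' : conj (conj B * ζ₂ + conj A) ≠ 0 := (map_ne_zero _).2 h₂
  rw [mobius, mobius, map_div₀, div_mul_div_comm, one_sub_div (mul_ne_zero h₂' h₁)]
  congr 1
  simp only [map_add, map_mul, conj_conj]
  ring

lemma pseudoDist_mobius (hAB : ‖B‖ < ‖A‖) {ζ₁ ζ₂ : ℂ} (h₁ : ζ₁ ∈ unitDisc)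
    (h₂ : ζ₂ ∈ unitDisc) : pseudoDist (mobius A B ζ₁) (mobius A B ζ₂) = pseudoDist ζ₁ ζ₂ := by
  have hE₁ := mobius_denom_ne_zero hAB (mem_unitDisc.1 h₁).le
  have hE₂ := mobius_denom_ne_zero hAB (mem_unitDisc.1 h₂).le
  rw [pseudoDist, pseudoDist, mobius_sub_mobius hE₁ hE₂, one_sub_conj_mobius_mul_mobius hE₁ hE₂]
  simp only [norm_div, norm_mul, Complex.norm_conj]
  have := norm_pos_iff.2 hE₁
  have := norm_pos_iff.2 hE₂
  have := norm_pos_iff.2 (mul_conj_sub_mul_conj_ne_zero hAB)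
  field_simp

lemma poincareDist_mobius (hAB : ‖B‖ < ‖A‖) {ζ₁ ζ₂ : ℂ} (h₁ : ζ₁ ∈ unitDisc)
    (h₂ : ζ₂ ∈ unitDisc) : poincareDist (mobius A B ζ₁) (mobius A B ζ₂) = poincareDist ζ₁ ζ₂ := by
  have h := pseudoDist_mobius hAB h₁ h₂
  unfold pseudoDist at h
  simp only [poincareDist, h]

lemma hasDerivAt_mobius {ζ : ℂ} (hζ : conj B * ζ + conj A ≠ 0) :
    HasDerivAt (mobius A B) ((A * conj A - B * conj B) / (conj B * ζ + conj A) ^ 2) ζ := by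
  have := (((hasDerivAt_id' ζ).const_mul A).add_const B).div
    (((hasDerivAt_id' ζ).const_mul (conj B)).add_const (conj A)) hζ
  exact this.congr_deriv (by ring)

lemma differentiableOn_mobius (hAB : ‖B‖ < ‖A‖) : DifferentiableOn ℂ (mobius A B) unitDisc :=
  fun _ hζ => (hasDerivAt_mobius (mobius_denom_ne_zero hAB (mem_unitDisc.1 hζ).le))
    |>.differentiableAt.differentiableWithinAt

lemma mobius_mobius_conj_neg (hAB : ‖B‖ < ‖A‖) {ζ : ℂ} (hζ : ‖ζ‖ ≤ 1) :
    mobius A B (mobius (conj A) (-B) ζ) = ζ := by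
  have h₁ : A - conj B * ζ ≠ 0 := by
    simpa [conj_conj, sub_eq_neg_add] using mobius_denom_ne_zero (A := conj A) (B := -B)
      (by simpa using hAB) hζ
  have h₁' : A - ζ * conj B ≠ 0 := by rwa [mul_comm]
  have hinner : mobius (conj A) (-B) ζ = (conj A * ζ - B) / (A - conj B * ζ) := by
    simp only [mobius, map_neg, conj_conj, sub_eq_add_neg, neg_mul, add_comm]
  have hden : conj B * mobius (conj A) (-B) ζ + conj A =
      (A * conj A - B * conj B) / (A - conj B * ζ) := by
    rw [hinner]
    field_simp
    ring
  rw [mobius, hden, div_eq_iff (div_ne_zero (mul_conj_sub_mul_conj_ne_zero hAB) h₁), hinner]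
  field_simp
  ring

end Mobius

lemma IsComplexGeodesic.comp_mobius {E : Type*} [NormedAddCommGroup E] [NormedSpace ℂ E]
    {D : Set E} {φ : ℂ → E} (hφ : IsComplexGeodesic D φ) {A B : ℂ} (hAB : ‖B‖ < ‖A‖) :
    IsComplexGeodesic D (φ ∘ mobius A B) := by
  obtain ⟨hd, hm, hk⟩ := hφ
  refine ⟨hd.comp (differentiableOn_mobius hAB) (mapsTo_mobius hAB),
    hm.comp (mapsTo_mobius hAB), fun ζ₁ h₁ ζ₂ h₂ => ?_⟩
  rw [Function.comp_apply, Function.comp_apply,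
    hk _ (mapsTo_mobius hAB h₁) _ (mapsTo_mobius hAB h₂), poincareDist_mobius hAB h₁ h₂]

lemma norm_le_pseudoDist_of_mapsTo {h : ℂ → ℂ} (hd : DifferentiableOn ℂ h unitDisc)
    (hm : MapsTo h unitDisc unitDisc) {η₁ η₂ : ℂ} (h₁ : η₁ ∈ unitDisc) (h₂ : η₂ ∈ unitDisc)
    (h0 : h η₂ = 0) : ‖h η₁‖ ≤ pseudoDist η₁ η₂ := by
  have hAB : ‖η₂‖ < ‖(1 : ℂ)‖ := by simpa [mem_unitDisc] using h₂
  have hAB' : ‖-η₂‖ < ‖conj (1 : ℂ)‖ := by simpa using hAB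
  have hz := mapsTo_mobius hAB' h₁
  have hk := Complex.norm_le_norm_of_mapsTo_ball (f := h ∘ mobius 1 η₂)
    (hd.comp (differentiableOn_mobius hAB) (mapsTo_mobius hAB))
    ((hm.comp (mapsTo_mobius hAB)).mono_right ball_subset_closedBall)
    (by simp [mobius, h0]) (mem_unitDisc.1 hz)
  rw [Function.comp_apply, mobius_mobius_conj_neg hAB (mem_unitDisc.1 h₁).le] at hk
  refine hk.trans_eq ?_
  simp [mobius, pseudoDist, sub_eq_add_neg, add_comm]

lemma norm_sub_lt_norm_sub_reflect {c : ℝ} {w α : ℂ} (hw : w.re < c) (hα : α.re < c) :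
    ‖w - α‖ < ‖w - (2 * c - conj α)‖ := by
  have h : normSq (w - α) < normSq (w - (2 * c - conj α)) := by
    have : normSq (w - (2 * c - conj α)) = normSq (w - α) + 4 * (c - w.re) * (c - α.re) := by
      simp only [normSq_apply, sub_re, sub_im, mul_re, mul_im, ofReal_re, ofReal_im, conj_re,
        conj_im, re_ofNat, im_ofNat]
      ring
    rw [this]
    nlinarith
  rw [normSq_eq_norm_sq, normSq_eq_norm_sq] at h
  exact lt_of_pow_lt_pow_left₀ 2 (norm_nonneg _) h

lemma norm_sub_reflect_self (c : ℝ) (α : ℂ) : ‖α - (2 * c - conj α)‖ = 2 * |c - α.re| := by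
  have : α - (2 * c - conj α) = ((2 * (α.re - c) : ℝ) : ℂ) := by
    apply Complex.ext <;> simp; ring
  rw [this, norm_real, Real.norm_eq_abs, abs_mul, abs_two, abs_sub_comm]

lemma norm_sub_mul_le_of_re_lt {g : ℂ → ℂ} (hg : DifferentiableOn ℂ g unitDisc) {c : ℝ}
    (hc : ∀ ζ ∈ unitDisc, (g ζ).re < c) {η₁ η₂ : ℂ} (h₁ : η₁ ∈ unitDisc) (h₂ : η₂ ∈ unitDisc) :
    ‖g η₁ - g η₂‖ * (1 - pseudoDist η₁ η₂) ≤ 2 * pseudoDist η₁ η₂ * (c - (g η₂).re) := by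
  set α := g η₂
  set α' : ℂ := 2 * c - conj α
  have hα := hc η₂ h₂
  have hden : ∀ ζ ∈ unitDisc, g ζ - α' ≠ 0 := fun ζ hζ h => by
    have := norm_sub_lt_norm_sub_reflect (hc ζ hζ) hα
    rw [show g ζ - (2 * c - conj α) = 0 from h, norm_zero] at this
    exact (norm_nonneg _).not_gt this
  -- `w ↦ (w - α) / (w - α')` maps the half-plane `re < c` into the disc, and `α` to `0`.
  have hT : ‖(g η₁ - α) / (g η₁ - α')‖ ≤ pseudoDist η₁ η₂ := by
    refine norm_le_pseudoDist_of_mapsTo (h := fun ζ => (g ζ - α) / (g ζ - α'))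
      ((hg.sub_const α).div (hg.sub_const α') hden) (fun ζ hζ => ?_) h₁ h₂ (by simp [α])
    rw [mem_unitDisc, norm_div, div_lt_one (norm_pos_iff.2 (hden ζ hζ))]
    exact norm_sub_lt_norm_sub_reflect (hc ζ hζ) hα
  rw [norm_div, div_le_iff₀ (norm_pos_iff.2 (hden η₁ h₁))] at hT
  have htri : ‖g η₁ - α'‖ ≤ ‖g η₁ - α‖ + 2 * (c - α.re) := by
    calc ‖g η₁ - α'‖ = ‖(g η₁ - α) + (α - α')‖ := by ring_nf
      _ ≤ ‖g η₁ - α‖ + ‖α - α'‖ := norm_add_le _ _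
      _ = ‖g η₁ - α‖ + 2 * (c - α.re) := by
        rw [norm_sub_reflect_self, abs_of_pos (sub_pos.2 hα)]
  have hm : 0 ≤ pseudoDist η₁ η₂ := by unfold pseudoDist; positivity
  nlinarith

lemma pseudoDist_norm_le {z : ℂ} (hz : ‖z‖ < 1) :
    pseudoDist z ‖z‖ ≤ ‖1 - (1 - z) / (1 - ‖z‖)‖ := by
  have hs : 0 < 1 - ‖z‖ := by linarith
  have hden : 1 - ‖z‖ ≤ ‖1 - conj (‖z‖ : ℂ) * z‖ := by
    rw [conj_ofReal]
    calc 1 - ‖z‖ ≤ 1 - ‖(‖z‖ : ℂ) * z‖ := by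
          rw [norm_mul, norm_real, norm_norm]; nlinarith [norm_nonneg z]
      _ ≤ ‖1 - (‖z‖ : ℂ) * z‖ := by simpa using norm_sub_norm_le (1 : ℂ) (‖z‖ * z)
  have hnum : z - ‖z‖ = ((1 - ‖z‖ : ℝ) : ℂ) * (1 - (1 - z) / (1 - ‖z‖)) := by
    have : (1 : ℂ) - ‖z‖ ≠ 0 := by exact_mod_cast hs.ne'
    push_cast
    field_simp
    ring
  rw [pseudoDist, hnum, norm_mul, norm_real, Real.norm_of_nonneg hs.le,
    div_le_iff₀ (hs.trans_le hden), mul_comm]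
  exact mul_le_mul_of_nonneg_left hden (norm_nonneg _)

lemma tendsto_pseudoDist_norm_of_tendsto_div {α : Type*} {l : Filter α} {γ : α → ℂ}
    (hγ : ∀ᶠ x in l, γ x ∈ unitDisc) (h : Tendsto (fun x => (1 - γ x) / (1 - ‖γ x‖)) l (𝓝 1)) :
    Tendsto (fun x => pseudoDist (γ x) ‖γ x‖) l (𝓝 0) := by
  have h' : Tendsto (fun x => ‖1 - (1 - γ x) / (1 - ‖γ x‖)‖) l (𝓝 0) := by
    simpa using ((tendsto_const_nhds (x := (1 : ℂ))).sub h).norm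
  refine squeeze_zero' (Eventually.of_forall fun x => by unfold pseudoDist; positivity) ?_ h'
  exact hγ.mono fun x hx => pseudoDist_norm_le (mem_unitDisc.1 hx)

section CProperConvex

variable {E : Type*} [NormedAddCommGroup E] [NormedSpace ℂ E] {D : Set E}

lemma IsCProperConvex.exists_re_bddAbove_apply_ne_zero (hD : IsCProperConvex D) {v : E}
    (hv : v ≠ 0) : ∃ Λ : StrongDual ℂ E, BddAbove ((fun z => (Λ z).re) '' D) ∧ Λ v ≠ 0 := by
  obtain ⟨⟨z, hz⟩, hopen, hconv, hline⟩ := hD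
  obtain ⟨ζ, hζ⟩ : ∃ ζ : ℂ, z + ζ • v ∉ D := by
    by_contra! h
    exact hline ⟨z, v, hv, h⟩
  obtain ⟨f, u, hfD, hfu⟩ := geometric_hahn_banach_open hconv hopen (convex_singleton _)
    (disjoint_singleton_right.2 hζ)
  refine ⟨StrongDual.extendRCLike f, ⟨u, ?_⟩, fun h0 => ?_⟩
  · rintro _ ⟨x, hx, rfl⟩
    exact (StrongDual.re_extendRCLike_apply (𝕜 := ℂ) f x).trans_le (hfD x hx).le
  · have hf : f (z + ζ • v) = f z := by
      rw [← StrongDual.re_extendRCLike_apply (𝕜 := ℂ),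
        ← StrongDual.re_extendRCLike_apply (𝕜 := ℂ) f z, map_add, map_smul, h0, smul_zero,
        add_zero]
    linarith [hfD z hz, hfu _ rfl]

lemma IsCProperConvex.tendsto_zero_of_forall_re_bddAbove [FiniteDimensional ℂ E]
    (hD : IsCProperConvex D) {α : Type*} {l : Filter α} {d : α → E}
    (h : ∀ Λ : StrongDual ℂ E, BddAbove ((fun z => (Λ z).re) '' D) →
      Tendsto (fun x => Λ (d x)) l (𝓝 0)) :
    Tendsto d l (𝓝 0) := by
  let S : Submodule ℂ (Module.Dual ℂ E) :=
    { carrier := {Λ | Tendsto (fun x => Λ (d x)) l (𝓝 0)}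
      add_mem' := fun {Λ₁ Λ₂} (h₁ : Tendsto (fun x => Λ₁ (d x)) l (𝓝 0))
        (h₂ : Tendsto (fun x => Λ₂ (d x)) l (𝓝 0)) => by simpa using h₁.add h₂
      zero_mem' := by simpa using tendsto_const_nhds
      smul_mem' := fun c _ hΛ => by simpa using hΛ.const_mul c }
  have hS₀ : S.dualCoannihilator = ⊥ := by
    refine (Submodule.eq_bot_iff _).2 fun v hv => ?_
    by_contra hv0
    obtain ⟨Λ, hΛ, hΛv⟩ := hD.exists_re_bddAbove_apply_ne_zero hv0
    exact hΛv ((Submodule.mem_dualCoannihilator _).1 hv Λ.toLinearMap (h Λ hΛ))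
  have hS : S = ⊤ := by
    rw [← Subspace.dualCoannihilator_dualAnnihilator_eq (W := S), hS₀,
      Submodule.dualAnnihilator_bot]
  let b := Module.finBasis ℂ E
  have hcoord : ∀ i, Tendsto (fun x => b.coord i (d x)) l (𝓝 0) := fun i =>
    show b.coord i ∈ S from hS ▸ Submodule.mem_top
  simpa [b.sum_repr] using tendsto_finsetSum Finset.univ fun i _ => (hcoord i).smul_const (b i)

theorem IsCProperConvex.tendsto_comp_of_tendsto_pseudoDist [FiniteDimensional ℂ E]
    (hD : IsCProperConvex D) {φ : ℂ → E} (hd : DifferentiableOn ℂ φ unitDisc)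
    (hm : MapsTo φ unitDisc D) {ξ : E} (hξ : HasEndpoint φ ξ) {α : Type*} {l : Filter α}
    {γ : α → ℂ} (hγ : ∀ᶠ x in l, γ x ∈ unitDisc) (hr : Tendsto (fun x => ‖γ x‖) l (𝓝[<] 1))
    (hρ : Tendsto (fun x => pseudoDist (γ x) ‖γ x‖) l (𝓝 0)) :
    Tendsto (fun x => φ (γ x)) l (𝓝 ξ) := by
  have hradial : Tendsto (fun x => φ ‖γ x‖) l (𝓝 ξ) := hξ.comp hr
  have hr' : ∀ᶠ x in l, ((‖γ x‖ : ℝ) : ℂ) ∈ unitDisc :=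
    (hr.eventually_mem self_mem_nhdsWithin).mono fun x hx => by simpa [mem_unitDisc] using hx
  suffices Tendsto (fun x => φ (γ x) - φ ‖γ x‖) l (𝓝 0) by simpa using this.add hradial
  refine hD.tendsto_zero_of_forall_re_bddAbove fun Λ ⟨c, hc⟩ => ?_
  have hg : DifferentiableOn ℂ (fun ζ => Λ (φ ζ)) unitDisc :=
    Λ.differentiable.comp_differentiableOn hd
  have hgc : ∀ ζ ∈ unitDisc, (Λ (φ ζ)).re < c + 1 :=
    fun ζ hζ => (hc ⟨_, hm hζ, rfl⟩).trans_lt (lt_add_one c)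
  have hlim : Tendsto (fun x => (Λ (φ ‖γ x‖)).re) l (𝓝 (Λ ξ).re) :=
    (continuous_re.tendsto _).comp ((Λ.continuous.tendsto ξ).comp hradial)
  have hbound : Tendsto (fun x => 2 * pseudoDist (γ x) ‖γ x‖ * (c + 1 - (Λ (φ ‖γ x‖)).re) /
      (1 - pseudoDist (γ x) ‖γ x‖)) l (𝓝 0) := by
    have := ((hρ.const_mul 2).mul (hlim.const_sub (c + 1))).div
      (tendsto_const_nhds.sub hρ) (by norm_num : (1 : ℝ) - 0 ≠ 0)
    rwa [mul_zero, zero_mul, zero_div] at this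
  refine squeeze_zero_norm' ?_ hbound
  filter_upwards [hγ, hr', hρ.eventually (gt_mem_nhds zero_lt_one)] with x h₁ h₂ hρx
  rw [map_sub, le_div_iff₀ (by linarith)]
  exact norm_sub_mul_le_of_re_lt hg hgc h₁ h₂

end CProperConvex

def mobiusFixingOne (ζ₀ : ℂ) : ℂ → ℂ := mobius (1 - ζ₀) (ζ₀ * conj (1 - ζ₀))

section MobiusFixingOne

variable {ζ₀ : ℂ}

lemma norm_mul_conj_one_sub_lt (h0 : ‖ζ₀‖ < 1) : ‖ζ₀ * conj (1 - ζ₀)‖ < ‖1 - ζ₀‖ := by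
  have : 0 < ‖1 - ζ₀‖ := norm_pos_iff.2 (sub_ne_zero.2 fun h => by simp [← h] at h0)
  rw [norm_mul, Complex.norm_conj]
  nlinarith

lemma mobiusFixingOne_zero (h0 : ‖ζ₀‖ < 1) : mobiusFixingOne ζ₀ 0 = ζ₀ := by
  have : conj (1 - ζ₀) ≠ 0 := (map_ne_zero _).2 (sub_ne_zero.2 fun h => by simp [← h] at h0)
  simp only [mobiusFixingOne, mobius, mul_zero, zero_add]
  field_simp

lemma mobiusFixingOne_denom_one :
    conj (ζ₀ * conj (1 - ζ₀)) * 1 + conj (1 - ζ₀) = 1 - ‖ζ₀‖ ^ 2 := by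
  rw [← mul_conj']
  simp only [map_mul, map_sub, map_one, conj_conj]
  ring

lemma one_sub_sq_norm_ne_zero (h0 : ‖ζ₀‖ < 1) : (1 : ℂ) - ‖ζ₀‖ ^ 2 ≠ 0 := by
  exact_mod_cast (by nlinarith [norm_nonneg ζ₀] : (1 : ℝ) - ‖ζ₀‖ ^ 2 ≠ 0)

lemma mobiusFixingOne_one (h0 : ‖ζ₀‖ < 1) : mobiusFixingOne ζ₀ 1 = 1 := by
  rw [mobiusFixingOne, mobius, mobiusFixingOne_denom_one,
    div_eq_one_iff_eq (one_sub_sq_norm_ne_zero h0), ← mul_conj']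
  simp only [map_sub, map_one]
  ring

lemma one_sub_mobiusFixingOne (h0 : ‖ζ₀‖ < 1) {ζ : ℂ} (hζ : ‖ζ‖ ≤ 1) :
    1 - mobiusFixingOne ζ₀ ζ =
      ‖1 - ζ₀‖ ^ 2 * (1 - ζ) / (conj (ζ₀ * conj (1 - ζ₀)) * ζ + conj (1 - ζ₀)) := by
  rw [mobiusFixingOne, mobius,
    one_sub_div (mobius_denom_ne_zero (norm_mul_conj_one_sub_lt h0) hζ), ← mul_conj']
  simp only [map_mul, map_sub, map_one, conj_conj]
  ring

lemma continuousAt_mobiusFixingOne_one (h0 : ‖ζ₀‖ < 1) : ContinuousAt (mobiusFixingOne ζ₀) 1 :=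
  (hasDerivAt_mobius (mobius_denom_ne_zero (norm_mul_conj_one_sub_lt h0) (by simp))).continuousAt

lemma norm_one_sub_mobiusFixingOne_mul_le (h0 : ‖ζ₀‖ < 1) {ζ : ℂ} (hζ : ζ ∈ unitDisc) :
    ‖1 - mobiusFixingOne ζ₀ ζ‖ * (1 - ‖ζ‖) * (1 - ‖ζ₀‖ ^ 2) ≤
      4 * ‖1 - ζ₀‖ * ‖1 - ζ‖ * (1 - ‖mobiusFixingOne ζ₀ ζ‖) := by
  have hAB := norm_mul_conj_one_sub_lt h0
  have hζ' := mem_unitDisc.1 hζ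
  have hw : ‖mobiusFixingOne ζ₀ ζ‖ < 1 := norm_mobius_lt_one hAB hζ'
  have hE := mobius_denom_ne_zero hAB hζ'.le
  have h1 := one_sub_mobiusFixingOne h0 hζ'.le
  have hsq : (1 - ‖mobiusFixingOne ζ₀ ζ‖ ^ 2) * _ = _ := one_sub_sq_norm_mobius_mul hAB hζ'.le
  have hζ₀ : 0 ≤ 1 - ‖ζ₀‖ ^ 2 := by nlinarith [norm_nonneg ζ₀]
  set A := 1 - ζ₀
  set E := conj (ζ₀ * conj A) * ζ + conj A
  set w := mobiusFixingOne ζ₀ ζ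
  rw [norm_mul, Complex.norm_conj] at hsq
  have hEpos : 0 < ‖E‖ := norm_pos_iff.2 hE
  have hnum : ‖1 - w‖ * ‖E‖ = ‖A‖ ^ 2 * ‖1 - ζ‖ := by
    rw [h1, norm_div, norm_mul, norm_pow, norm_real, norm_norm, div_mul_cancel₀ _ hEpos.ne']
  have hEA : ‖E‖ ≤ 2 * ‖A‖ := by
    calc ‖E‖ ≤ ‖conj (ζ₀ * conj A) * ζ‖ + ‖conj A‖ := norm_add_le _ _
      _ ≤ ‖A‖ + ‖A‖ := by
        gcongr
        · rw [norm_mul, Complex.norm_conj]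
          nlinarith [norm_nonneg ζ, norm_nonneg (ζ₀ * conj A)]
        · rw [Complex.norm_conj]
      _ = 2 * ‖A‖ := by ring
  have hζ0 := norm_nonneg ζ
  refine le_of_mul_le_mul_right ?_ hEpos
  calc ‖1 - w‖ * (1 - ‖ζ‖) * (1 - ‖ζ₀‖ ^ 2) * ‖E‖
      = ‖A‖ ^ 2 * (1 - ‖ζ₀‖ ^ 2) * (1 - ‖ζ‖) * ‖1 - ζ‖ := by
        linear_combination (1 - ‖ζ‖) * (1 - ‖ζ₀‖ ^ 2) * hnum
    _ ≤ ‖A‖ ^ 2 * (1 - ‖ζ₀‖ ^ 2) * (1 - ‖ζ‖ ^ 2) * ‖1 - ζ‖ := by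
        gcongr
        nlinarith
    _ = (1 + ‖w‖) * ‖E‖ * ((1 - ‖w‖) * ‖E‖ * ‖1 - ζ‖) := by
        linear_combination -‖1 - ζ‖ * hsq
    _ ≤ 2 * (2 * ‖A‖) * ((1 - ‖w‖) * ‖E‖ * ‖1 - ζ‖) := by
        have : 0 ≤ 1 - ‖w‖ := by linarith
        gcongr
        linarith
    _ = 4 * ‖A‖ * ‖1 - ζ‖ * (1 - ‖w‖) * ‖E‖ := by ring

lemma exists_tendsto_mobiusFixingOne_stolzAt (h0 : ‖ζ₀‖ < 1) {M : ℝ} (hM : 1 < M) :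
    ∃ M' > 1, Tendsto (mobiusFixingOne ζ₀) (𝓝[stolzAt 1 M] 1) (𝓝[stolzAt 1 M'] 1) := by
  have hAB := norm_mul_conj_one_sub_lt h0
  have hA : 0 < ‖1 - ζ₀‖ := (norm_nonneg _).trans_lt hAB
  have hζ₀ : 0 < 1 - ‖ζ₀‖ ^ 2 := by nlinarith [norm_nonneg ζ₀]
  refine ⟨max 2 (4 * M * ‖1 - ζ₀‖ / (1 - ‖ζ₀‖ ^ 2)), lt_max_of_lt_left one_lt_two, ?_⟩
  refine tendsto_nhdsWithin_iff.2 ⟨?_, ?_⟩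
  · simpa [mobiusFixingOne_one h0] using
      (continuousAt_mobiusFixingOne_one h0).tendsto.mono_left nhdsWithin_le_nhds
  filter_upwards [self_mem_nhdsWithin] with ζ ⟨hζ, hζM⟩
  refine ⟨mapsTo_mobius hAB hζ, ?_⟩
  set w := mobiusFixingOne ζ₀ ζ
  have hw : 0 < 1 - ‖w‖ := sub_pos.2 (mem_unitDisc.1 (mapsTo_mobius hAB hζ))
  have hζ' : 0 < 1 - ‖ζ‖ := sub_pos.2 (mem_unitDisc.1 hζ)
  have hbound := norm_one_sub_mobiusFixingOne_mul_le h0 hζ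
  calc ‖1 - w‖ ≤ 4 * ‖1 - ζ₀‖ * ‖1 - ζ‖ * (1 - ‖w‖) / ((1 - ‖ζ‖) * (1 - ‖ζ₀‖ ^ 2)) := by
        rw [le_div_iff₀ (by positivity)]; linarith
    _ < 4 * ‖1 - ζ₀‖ * (M * (1 - ‖ζ‖)) * (1 - ‖w‖) / ((1 - ‖ζ‖) * (1 - ‖ζ₀‖ ^ 2)) := by
        gcongr
    _ = 4 * M * ‖1 - ζ₀‖ / (1 - ‖ζ₀‖ ^ 2) * (1 - ‖w‖) := by field_simp
    _ ≤ max 2 (4 * M * ‖1 - ζ₀‖ / (1 - ‖ζ₀‖ ^ 2)) * (1 - ‖w‖) := by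
        gcongr; exact le_max_right _ _

lemma one_sub_mobiusFixingOne_div_eq (h0 : ‖ζ₀‖ < 1) {t : ℝ} (ht : t ∈ Ioo (-1 : ℝ) 1) :
    (1 - mobiusFixingOne ζ₀ t) / (1 - ‖mobiusFixingOne ζ₀ t‖) =
      conj (conj (ζ₀ * conj (1 - ζ₀)) * t + conj (1 - ζ₀)) * (1 + ‖mobiusFixingOne ζ₀ t‖) /
        ((1 - ‖ζ₀‖ ^ 2) * (1 + t)) := by
  have hAB := norm_mul_conj_one_sub_lt h0
  have ht' : ‖(t : ℂ)‖ < 1 := by rw [norm_real, Real.norm_eq_abs, abs_lt]; exact ht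
  have hE := mobius_denom_ne_zero hAB ht'.le
  have hw : ‖mobiusFixingOne ζ₀ t‖ < 1 := norm_mobius_lt_one hAB ht'
  have h1 := one_sub_mobiusFixingOne h0 ht'.le
  have h2 : (1 - ‖mobiusFixingOne ζ₀ t‖ ^ 2) * _ = _ := one_sub_sq_norm_mobius_mul hAB ht'.le
  set A := 1 - ζ₀
  set E := conj (ζ₀ * conj A) * t + conj A
  set w := mobiusFixingOne ζ₀ t
  rw [norm_mul, Complex.norm_conj, norm_real, Real.norm_eq_abs, sq_abs] at h2
  have h2c : ((1 - ‖w‖) * (1 + ‖w‖) : ℂ) * (E * conj E) =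
      ‖A‖ ^ 2 * (1 - ‖ζ₀‖ ^ 2) * (1 - t) * (1 + t) := by
    rw [mul_conj']
    exact_mod_cast (by linear_combination h2 : (1 - ‖w‖) * (1 + ‖w‖) * ‖E‖ ^ 2 =
      ‖A‖ ^ 2 * (1 - ‖ζ₀‖ ^ 2) * (1 - t) * (1 + t))
  have hden : (1 : ℂ) - ‖w‖ ≠ 0 := by exact_mod_cast (sub_pos.2 hw).ne'
  have hden' : ((1 : ℂ) - ‖ζ₀‖ ^ 2) * (1 + t) ≠ 0 :=
    mul_ne_zero (one_sub_sq_norm_ne_zero h0) (by exact_mod_cast (by linarith [ht.1] : 1 + t ≠ 0))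
  rw [div_eq_div_iff hden hden', h1, div_mul_eq_mul_div, div_eq_iff hE]
  linear_combination -h2c

lemma tendsto_one_sub_mobiusFixingOne_div (h0 : ‖ζ₀‖ < 1) :
    Tendsto (fun t : ℝ => (1 - mobiusFixingOne ζ₀ t) / (1 - ‖mobiusFixingOne ζ₀ t‖))
      (𝓝[<] 1) (𝓝 1) := by
  set E : ℂ → ℂ := fun ζ => conj (ζ₀ * conj (1 - ζ₀)) * ζ + conj (1 - ζ₀)
  set F : ℝ → ℂ := fun t =>
    conj (E t) * (1 + ‖mobiusFixingOne ζ₀ t‖) / ((1 - ‖ζ₀‖ ^ 2) * (1 + t))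
  have hNc : ContinuousAt (fun t : ℝ => mobiusFixingOne ζ₀ t) 1 :=
    ContinuousAt.comp (x := 1) (by rw [ofReal_one]; exact continuousAt_mobiusFixingOne_one h0)
      continuous_ofReal.continuousAt
  have hF : ContinuousAt F 1 := by
    have hE : Continuous fun t : ℝ => conj (E t) :=
      continuous_conj.comp (by fun_prop : Continuous fun ζ => E ζ) |>.comp continuous_ofReal
    refine ContinuousAt.div (hE.continuousAt.mul
      (continuousAt_const.add (continuous_ofReal.continuousAt.comp hNc.norm)))
      (continuousAt_const.mul (continuousAt_const.add continuous_ofReal.continuousAt)) ?_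
    exact mul_ne_zero (one_sub_sq_norm_ne_zero h0) (by norm_num)
  have hF1 : F 1 = 1 := by
    have := one_sub_sq_norm_ne_zero h0
    have hE1 : E 1 = 1 - ‖ζ₀‖ ^ 2 := mobiusFixingOne_denom_one
    simp only [F, ofReal_one, hE1, mobiusFixingOne_one h0, norm_one, map_sub, map_one, map_pow,
      conj_ofReal]
    field_simp
  refine (hF1 ▸ hF.tendsto.mono_left nhdsWithin_le_nhds).congr' ?_
  filter_upwards [Ioo_mem_nhdsLT (show (-1 : ℝ) < 1 by norm_num)] with t ht
  exact (one_sub_mobiusFixingOne_div_eq h0 ht).symm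

lemma tendsto_deriv_mobiusFixingOne (h0 : ‖ζ₀‖ < 1) :
    Tendsto (deriv (mobiusFixingOne ζ₀)) (𝓝 1)
      (𝓝 ((‖1 - ζ₀‖ ^ 2 / (1 - ‖ζ₀‖ ^ 2) : ℝ) : ℂ)) := by
  have hAB := norm_mul_conj_one_sub_lt h0
  set A := 1 - ζ₀
  set B := ζ₀ * conj A
  set E : ℂ → ℂ := fun ζ => conj B * ζ + conj A
  have hE1 : E 1 ≠ 0 := mobius_denom_ne_zero hAB (by simp)
  have hG : ContinuousAt (fun ζ => (A * conj A - B * conj B) / E ζ ^ 2) 1 :=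
    continuousAt_const.div (by fun_prop) (pow_ne_zero 2 hE1)
  have hval : (A * conj A - B * conj B) / E 1 ^ 2 =
      ((‖1 - ζ₀‖ ^ 2 / (1 - ‖ζ₀‖ ^ 2) : ℝ) : ℂ) := by
    have hE1' : E 1 = 1 - ‖ζ₀‖ ^ 2 := mobiusFixingOne_denom_one
    have := one_sub_sq_norm_ne_zero h0
    rw [hE1', mul_conj', mul_conj', norm_mul, Complex.norm_conj]
    push_cast
    field_simp
    ring
  refine (hval ▸ hG.tendsto).congr' ?_
  filter_upwards [(show Continuous E by fun_prop).continuousAt.eventually_ne hE1] with ζ hζ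
  exact (hasDerivAt_mobius hζ).deriv.symm

end MobiusFixingOne

lemma HasEndpoint.comp_mobiusFixingOne {E : Type*} [NormedAddCommGroup E] [NormedSpace ℂ E]
    [FiniteDimensional ℂ E] {D : Set E} (hD : IsCProperConvex D) {φ : ℂ → E}
    (hd : DifferentiableOn ℂ φ unitDisc) (hm : MapsTo φ unitDisc D) {ξ : E}
    (hξ : HasEndpoint φ ξ) {ζ₀ : ℂ} (h0 : ‖ζ₀‖ < 1) :
    HasEndpoint (φ ∘ mobiusFixingOne ζ₀) ξ := by
  have hAB := norm_mul_conj_one_sub_lt h0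
  have hγ : ∀ᶠ t : ℝ in 𝓝[<] 1, mobiusFixingOne ζ₀ t ∈ unitDisc := by
    filter_upwards [Ioo_mem_nhdsLT (show (-1 : ℝ) < 1 by norm_num)] with t ht
    exact mapsTo_mobius hAB (mem_unitDisc.2 (by rw [norm_real, Real.norm_eq_abs, abs_lt]; exact ht))
  have hr : Tendsto (fun t : ℝ => ‖mobiusFixingOne ζ₀ t‖) (𝓝[<] 1) (𝓝[<] 1) := by
    refine tendsto_nhdsWithin_iff.2 ⟨?_, hγ.mono fun t ht => mem_unitDisc.1 ht⟩
    have := ((continuousAt_mobiusFixingOne_one h0).norm.tendsto.comp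
      (continuous_ofReal.tendsto (1 : ℝ))).mono_left (nhdsWithin_le_nhds (s := Iio 1))
    simpa [Function.comp_def, mobiusFixingOne_one h0] using this
  exact hD.tendsto_comp_of_tendsto_pseudoDist hd hm hξ hγ hr
    (tendsto_pseudoDist_norm_of_tendsto_div hγ (tendsto_one_sub_mobiusFixingOne_div h0))

lemma herm_smul {n : ℕ} (c : ℂ) (v w : En n) : herm (c • v) w = c * herm v w := by
  simp only [herm, Finset.mul_sum, PiLp.smul_apply, smul_eq_mul, mul_assoc]

lemma NTLim.herm_deriv_comp_mobiusFixingOne {n : ℕ} {φ : ℂ → En n}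
    (hd : DifferentiableOn ℂ φ unitDisc) {v : En n} {a : ℂ}
    (h : NTLim (fun ζ => herm (deriv φ ζ) v) 1 a) {ζ₀ : ℂ} (h0 : ‖ζ₀‖ < 1) :
    NTLim (fun ζ => herm (deriv (φ ∘ mobiusFixingOne ζ₀) ζ) v) 1
      ((‖1 - ζ₀‖ ^ 2 / (1 - ‖ζ₀‖ ^ 2) : ℝ) * a) := by
  intro M hM
  have hAB := norm_mul_conj_one_sub_lt h0
  obtain ⟨M', hM', hN⟩ := exists_tendsto_mobiusFixingOne_stolzAt h0 hM
  refine (((tendsto_deriv_mobiusFixingOne h0).mono_left nhdsWithin_le_nhds).mul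
    ((h M' hM').comp hN)).congr' ?_
  filter_upwards [self_mem_nhdsWithin] with ζ ⟨hζ, _⟩
  have hNζ : mobiusFixingOne ζ₀ ζ ∈ unitDisc := mapsTo_mobius hAB hζ
  have hN : DifferentiableAt ℂ (mobiusFixingOne ζ₀) ζ :=
    (hasDerivAt_mobius (mobius_denom_ne_zero hAB (mem_unitDisc.1 hζ).le)).differentiableAt
  rw [deriv.scomp ζ ((hd _ hNζ).differentiableAt (isOpen_ball.mem_nhds hNζ)) hN, herm_smul]
  rfl

theorem stmt2_general {n : ℕ} (D : Set (En n)) (hD : IsCProperConvex D)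
    (ξ : En n)
    (nξ : En n)
    (φ : ℂ → En n) (hφ : IsComplexGeodesic D φ) (hφe : HasEndpoint φ ξ)
    (a : ℝ) (ha : 0 < a)
    (hφa : NTLim (fun ζ => herm (deriv φ ζ) nξ) 1 (a : ℂ))
    (Ω : En n → ℝ) (hΩ : IsPoissonKernel D ξ nξ Ω) :
    ∀ ζ ∈ unitDisc,
      Ω (φ ζ) = -(1 - ‖ζ‖ ^ 2) / (‖1 - ζ‖ ^ 2 * a) := by
  intro ζ₀ hζ₀
  have h0 := mem_unitDisc.1 hζ₀
  have hψ : IsComplexGeodesic D (φ ∘ mobiusFixingOne ζ₀) :=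
    hφ.comp_mobius (norm_mul_conj_one_sub_lt h0)
  have hψe := hφe.comp_mobiusFixingOne hD hφ.1 hφ.2.1 h0
  have hψa := hφa.herm_deriv_comp_mobiusFixingOne hφ.1 h0
  have hA : 0 < ‖1 - ζ₀‖ := (norm_nonneg _).trans_lt (norm_mul_conj_one_sub_lt h0)
  have hB : 0 < 1 - ‖ζ₀‖ ^ 2 := by nlinarith [norm_nonneg ζ₀]
  rw [← ofReal_mul] at hψa
  rw [hΩ _ (hφ.2.1 hζ₀) _ hψ (by rw [Function.comp_apply, mobiusFixingOne_zero h0]) hψe _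
    (by positivity) hψa]
  field_simp

/-- along a complex geodesic `φ` with endpoint `ξ`,
`Ω_ξ(φ(ζ)) = −(1−|ζ|²)/(|1−ζ|² · φ'_N(1))` for every `ζ ∈ 𝔻`. -/
theorem stmt2 {n : ℕ} (D : Set (En n)) (hD : IsCProperConvex D)
    (ξ : En n) (hξ : IsLocallyFiniteType D ξ)
    (nξ : En n) (hn : IsOuterUnitNormal D ξ nξ)
    (φ : ℂ → En n) (hφ : IsComplexGeodesic D φ) (hφe : HasEndpoint φ ξ)
    (a : ℝ) (ha : 0 < a)
    (hφa : NTLim (fun ζ => herm (deriv φ ζ) nξ) 1 (a : ℂ))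
    (Ω : En n → ℝ) (hΩ : IsPoissonKernel D ξ nξ Ω) :
    ∀ ζ ∈ unitDisc,
      Ω (φ ζ) = -(1 - ‖ζ‖ ^ 2) / (‖1 - ζ‖ ^ 2 * a) :=
  stmt2_general D hD ξ nξ φ hφ hφe a ha hφa Ω hΩ
end
end

section
/- Let D ⊆ ℂⁿ be a ℂ-proper convex domain, let η̂ ∈ ∂D, let n be a unit vector, and let r > 0 be such that the open Euclidean ball B(η̂ − r·n, r) is contained in D. Let z = η̂ − a·n and w = η̂ − b·n with 0 < a, b < r and suppose δ_D(z) = a and δ_D(w) = b. Then k_D(z,w) ≤ |log(a/b)| − log(1 − max(a,b)/(2r)). -/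
open Filter Topology Metric Set

noncomputable section

/-! The complex line through the centre `ηh - r • v` of the ball in the direction `v` cuts the
ball in a disc of radius `r`, so `ζ ↦ ηh - r • v + ζ • (r • v)` is a holomorphic disc in `D`.
It passes through `ηh - a • v` and `ηh - b • v` at the real points `1 - a / r` and `1 - b / r`,
whose Poincaré distance is `log (s (2 - t) / (t (2 - s)))` for `s = a / r ≥ t = b / r`; bounding
`2 - t` by `2` gives the estimate. -/

lemma poincareDist_nonneg (ζ₁ ζ₂ : ℂ) : 0 ≤ poincareDist ζ₁ ζ₂ := by
  unfold poincareDist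
  set m := ‖ζ₁ - ζ₂‖ / ‖1 - (starRingEnd ℂ) ζ₂ * ζ₁‖
  have hm : 0 ≤ m := by positivity
  rcases eq_or_ne (1 - m) 0 with h | h
  · rw [h, div_zero, Real.log_zero]
  · rw [← Real.log_abs, abs_div, abs_of_nonneg (by linarith)]
    apply Real.log_nonneg
    rw [le_div_iff₀ (abs_pos.mpr h), one_mul, abs_le]
    constructor <;> linarith

lemma poincareDist_comm (ζ₁ ζ₂ : ℂ) : poincareDist ζ₁ ζ₂ = poincareDist ζ₂ ζ₁ := by
  have h : ‖1 - (starRingEnd ℂ) ζ₂ * ζ₁‖ = ‖1 - (starRingEnd ℂ) ζ₁ * ζ₂‖ := by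
    rw [← Complex.norm_conj]
    simp [mul_comm]
  simp only [poincareDist, h, norm_sub_rev ζ₁ ζ₂]

lemma poincareDist_one_sub_ofReal {s t : ℝ} (ht : 0 < t) (hts : t ≤ s) (hs : s < 1) :
    poincareDist ((1 - s : ℝ) : ℂ) ((1 - t : ℝ) : ℂ) =
      Real.log (s * (2 - t) / (t * (2 - s))) := by
  have hnum : ‖((1 - s : ℝ) : ℂ) - ((1 - t : ℝ) : ℂ)‖ = s - t := by
    rw [← Complex.ofReal_sub, Complex.norm_real, Real.norm_eq_abs, abs_of_nonpos (by linarith)]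
    ring
  have hden : ‖1 - (starRingEnd ℂ) ((1 - t : ℝ) : ℂ) * ((1 - s : ℝ) : ℂ)‖ = s + t - s * t := by
    rw [Complex.conj_ofReal, ← Complex.ofReal_mul, ← Complex.ofReal_one, ← Complex.ofReal_sub,
      Complex.norm_real, Real.norm_eq_abs, abs_of_nonneg (by nlinarith)]
    ring
  have hd : 0 < s + t - s * t := by nlinarith
  have hd' : 0 < s + t - s * t - (s - t) := by nlinarith
  have h2s : 2 - s ≠ 0 := by linarith
  rw [poincareDist, hnum, hden]
  congr 1
  field_simp
  ring

lemma poincareDist_one_sub_ofReal_le {s t : ℝ} (hs : 0 < s) (hs1 : s < 1) (ht : 0 < t)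
    (ht1 : t < 1) :
    poincareDist ((1 - s : ℝ) : ℂ) ((1 - t : ℝ) : ℂ) ≤
      |Real.log (s / t)| - Real.log (1 - max s t / 2) := by
  wlog hts : t ≤ s generalizing s t
  · rw [poincareDist_comm, max_comm, ← abs_neg, ← Real.log_inv, inv_div]
    exact this ht ht1 hs hs1 (by linarith)
  have h2s : 0 < 2 - s := by linarith
  rw [poincareDist_one_sub_ofReal ht hts hs1, max_eq_left hts,
    abs_of_nonneg (Real.log_nonneg ((one_le_div ht).mpr hts)),
    ← Real.log_div (div_pos hs ht).ne' (by linarith),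
    show s / t / (1 - s / 2) = s * 2 / (t * (2 - s)) by field_simp]
  apply Real.log_le_log (div_pos (mul_pos hs (by linarith)) (mul_pos ht h2s))
  gcongr
  linarith

lemma kob_le_poincareDist {E : Type*} [NormedAddCommGroup E] [NormedSpace ℂ E] {D : Set E}
    {φ : ℂ → E} (hφ : DifferentiableOn ℂ φ unitDisc) (hφD : MapsTo φ unitDisc D)
    {ζ₁ ζ₂ : ℂ} (h₁ : ζ₁ ∈ unitDisc) (h₂ : ζ₂ ∈ unitDisc) :
    kob D (φ ζ₁) (φ ζ₂) ≤ poincareDist ζ₁ ζ₂ := by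
  refine csInf_le ⟨0, ?_⟩ ⟨φ, hφ, hφD, ζ₁, h₁, ζ₂, h₂, rfl, rfl, rfl⟩
  rintro c ⟨-, -, -, ζ₁, -, ζ₂, -, -, -, rfl⟩
  exact poincareDist_nonneg ζ₁ ζ₂

lemma mapsTo_unitDisc_ball {E : Type*} [NormedAddCommGroup E] [NormedSpace ℂ E] (x : E)
    {w : E} (hw : w ≠ 0) : MapsTo (fun ζ : ℂ => x + ζ • w) unitDisc (ball x ‖w‖) := by
  intro ζ hζ
  rw [unitDisc, mem_ball_zero_iff] at hζ
  rw [mem_ball, dist_eq_norm, add_sub_cancel_left, norm_smul]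
  exact mul_lt_of_lt_one_left (norm_pos_iff.mpr hw) hζ

lemma ofReal_one_sub_mem_unitDisc {s : ℝ} (hs : 0 < s) (hs1 : s < 2) :
    ((1 - s : ℝ) : ℂ) ∈ unitDisc := by
  rw [unitDisc, mem_ball_zero_iff, Complex.norm_real, Real.norm_eq_abs, abs_lt]
  constructor <;> linarith

theorem stmt10_general {n : ℕ} (D : Set (En n))
    (ηh : En n) (v : En n) (hv : ‖v‖ = 1)
    (r : ℝ) (hr : 0 < r) (hball : Metric.ball (ηh - r • v) r ⊆ D)
    (a b : ℝ) (ha : 0 < a) (har : a < r) (hb : 0 < b) (hbr : b < r) :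
    kob D (ηh - a • v) (ηh - b • v) ≤
      |Real.log (a / b)| - Real.log (1 - max a b / (2 * r)) := by
  set φ : ℂ → En n := fun ζ => (ηh - r • v) + ζ • (r • v)
  have hrv : ‖r • v‖ = r := by rw [norm_smul, hv, mul_one, Real.norm_of_nonneg hr.le]
  have hφD : MapsTo φ unitDisc D := by
    have hrv0 : r • v ≠ 0 := norm_pos_iff.mp (hrv.symm ▸ hr)
    exact (mapsTo_unitDisc_ball _ hrv0).mono_right (by rwa [hrv])
  have hφ : DifferentiableOn ℂ φ unitDisc := by fun_prop
  have hφ_ofReal (c : ℝ) : φ ((1 - c / r : ℝ) : ℂ) = ηh - c • v := by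
    simp only [φ, Complex.coe_smul, smul_smul, sub_mul, one_mul, div_mul_cancel₀ c hr.ne',
      sub_smul]
    abel
  have hmem {c : ℝ} (hc : 0 < c) (hcr : c < r) : ((1 - c / r : ℝ) : ℂ) ∈ unitDisc :=
    ofReal_one_sub_mem_unitDisc (div_pos hc hr) (by linarith [(div_lt_one hr).mpr hcr])
  calc kob D (ηh - a • v) (ηh - b • v)
      ≤ poincareDist ((1 - a / r : ℝ) : ℂ) ((1 - b / r : ℝ) : ℂ) := by
        simpa only [hφ_ofReal] using kob_le_poincareDist hφ hφD (hmem ha har) (hmem hb hbr)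
    _ ≤ |Real.log (a / r / (b / r))| - Real.log (1 - max (a / r) (b / r) / 2) :=
        poincareDist_one_sub_ofReal_le (div_pos ha hr) ((div_lt_one hr).mpr har)
          (div_pos hb hr) ((div_lt_one hr).mpr hbr)
    _ = |Real.log (a / b)| - Real.log (1 - max a b / (2 * r)) := by
        rw [div_div_div_cancel_right₀ hr.ne', max_div_div_right hr.le, div_div, mul_comm r]

/-- if the ball `B(η̂ − r·n, r)` is contained in `D` and `z = η̂ − a·n`,
`w = η̂ − b·n` with `δ_D(z) = a`, `δ_D(w) = b`, `0 < a, b < r`, then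
`k_D(z,w) ≤ |log(a/b)| − log(1 − max(a,b)/(2r))`. -/
theorem stmt10 {n : ℕ} (D : Set (En n)) (hD : IsCProperConvex D)
    (ηh : En n) (hη : ηh ∈ frontier D) (v : En n) (hv : ‖v‖ = 1)
    (r : ℝ) (hr : 0 < r) (hball : Metric.ball (ηh - r • v) r ⊆ D)
    (a b : ℝ) (ha : 0 < a) (har : a < r) (hb : 0 < b) (hbr : b < r)
    (hda : deltaD D (ηh - a • v) = a) (hdb : deltaD D (ηh - b • v) = b) :
    kob D (ηh - a • v) (ηh - b • v) ≤
      |Real.log (a / b)| - Real.log (1 - max a b / (2 * r)) :=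
  stmt10_general D ηh v hv r hr hball a b ha har hb hbr
end
end
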